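/- For g = osp(1|2n) and any finite-dimensional g-module V, the subspaces A_•^{(1)}, …, A_•^{(n)} and B_•^{(1)}, …, B_•^{(n)} of C_•(n̄, V) are linearly independent; setting A_• = ⊕_j A_•^{(j)} and B_• = ⊕_j B_•^{(j)}, one has W_•(n̄, V) = A_• ⊕ B_•, and A_k ≅ B_{k−1} as h-modules for every k ∈ ℕ. -/

import Mathlib

noncomputable section

/-- The positive roots of `osp(1|2n)`: the even roots `δ_i − δ_j` (`i < j`) and
`δ_i + δ_j` (`i ≤ j`, giving `2δ_i` when `i = j`), and the odd roots `δ_i`.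
For each positive root `α` we have the fixed negative root vector `Y_α ∈ n̄` of weight `−α`,
normalised so that `[Y_{δ_i}, Y_{δ_i}] = Y_{2δ_i}`. -/
inductive OspRoot (n : ℕ) : Type
  | diff : (i j : Fin n) → i < j → OspRoot n
  | sum : (i j : Fin n) → i ≤ j → OspRoot n
  | odd : Fin n → OspRoot n

instance {n : ℕ} : DecidableEq (OspRoot n) := fun _ _ => Classical.dec _

/-- whether a positive root is odd -/
def OspRoot.IsOdd {n : ℕ} : OspRoot n → Prop
  | .odd _ => True
  | _ => False

/-- the root `2δ_i` -/
def OspRoot.dd {n : ℕ} (i : Fin n) : OspRoot n := .sum i i le_rfl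

/-- a positive root as an element of the weight lattice `ℤⁿ` (coordinates w.r.t. `δ₁, …, δₙ`) -/
def rootVecZ {n : ℕ} : OspRoot n → (Fin n → ℤ)
  | .diff i j _ => fun t => (if t = i then 1 else 0) - (if t = j then 1 else 0)
  | .sum i j _ => fun t => (if t = i then 1 else 0) + (if t = j then 1 else 0)
  | .odd i => fun t => if t = i then 1 else 0

/-- A basis monomial `Y_{α₁} ∧ ⋯ ∧ Y_{α_d} ⊗ v` of the super exterior algebra chain space
`C_•(n̄, V) = Λ^• n̄ ⊗ V`: a multiset of positive roots in which every even root occurs at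
most once (odd root vectors have nonvanishing wedge powers), together with a basis weight
vector of `V` (indexed by `ι`). -/
def ChainBasis (n : ℕ) (ι : Type) : Type :=
  {m : OspRoot n →₀ ℕ // ∀ r : OspRoot n, ¬ r.IsOdd → m r ≤ 1} × ι

/-- the space of chains `C_•(n̄, V) = Λ^• n̄ ⊗ V`, as the free `ℂ`-vector space on the
basis monomials -/
def Chains (n : ℕ) (ι : Type) : Type := ChainBasis n ι →₀ ℂ

instance {n : ℕ} {ι : Type} : AddCommGroup (Chains n ι) := Finsupp.instAddCommGroup
instance {n : ℕ} {ι : Type} : Module ℂ (Chains n ι) := Finsupp.module _ _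

/-- the degree of a monomial in `Λ^• n̄` (number of wedge factors) -/
def degOf {n : ℕ} (m : OspRoot n →₀ ℕ) : ℕ := m.sum fun _ k => k

/-- the monomial contains `Y_{2δ_i}` or `Y_{δ_i}^{∧2}` for some `i`
(i.e. it lies in `W_•(n̄,V)`) -/
def Wcond {n : ℕ} (m : OspRoot n →₀ ℕ) : Prop :=
  ∃ i : Fin n, 1 ≤ m (.dd i) ∨ 2 ≤ m (.odd i)

/-- the monomial contains no `Y_{2δ_i}` and no `Y_{δ_i}^{∧2}`
(i.e. it lies in `R_•(n̄,V)`) -/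
def Rcond {n : ℕ} (m : OspRoot n →₀ ℕ) : Prop :=
  ∀ i : Fin n, m (.dd i) = 0 ∧ m (.odd i) ≤ 1

/-- the monomial is of the form `Y_{δ_j}^{∧2} ∧ f` where `f` contains no `Y_{2δ_j}`,
nor any `Y_{2δ_i}` or `Y_{δ_i}^{∧2}` with `i < j` (i.e. it lies in `A_•^{(j)}`) -/
def Acond {n : ℕ} (j : Fin n) (m : OspRoot n →₀ ℕ) : Prop :=
  2 ≤ m (.odd j) ∧ m (.dd j) = 0 ∧ ∀ i : Fin n, i < j → m (.dd i) = 0 ∧ m (.odd i) ≤ 1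

/-- the monomial is of the form `Y_{2δ_j} ∧ f` where `f` contains no `Y_{2δ_i}` or
`Y_{δ_i}^{∧2}` with `i < j` (i.e. it lies in `B_•^{(j)}`) -/
def Bcond {n : ℕ} (j : Fin n) (m : OspRoot n →₀ ℕ) : Prop :=
  1 ≤ m (.dd j) ∧ ∀ i : Fin n, i < j → m (.dd i) = 0 ∧ m (.odd i) ≤ 1

/-- the `ℂ`-span of the monomials in `C_•(n̄,V)` satisfying a given condition on the
wedge part -/
def monSpan {n : ℕ} {ι : Type} (P : (OspRoot n →₀ ℕ) → Prop) : Submodule ℂ (Chains n ι) :=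
  Finsupp.supported ℂ ℂ {p : ChainBasis n ι | P p.1.1}

/-- the weight of a basis monomial, as an `h`-module: `wt(v) − Σ α_k` -/
def wtOf {n : ℕ} {ι : Type} (wt : ι → Fin n → ℤ) (p : ChainBasis n ι) : Fin n → ℤ :=
  wt p.2 - p.1.1.sum fun r k => (k : ℤ) • rootVecZ r

/-- the contribution of a single root vector factor to the grading `D`:
`+1` for `Y_α` with `α ∈ M = {δ_i−δ_j | i<j}`, `−1` for `α ∈ P = {δ_i+δ_j | i<j}`,
`0` otherwise -/
def rootD {n : ℕ} : OspRoot n → ℤ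
  | .diff _ _ _ => 1
  | .sum i j _ => if i = j then 0 else -1
  | .odd _ => 0

/-- the grading `D` of a basis monomial `Y_{α₁} ∧ ⋯ ∧ Y_{α_d} ⊗ v`:
`#{k | α_k ∈ M} − #{k | α_k ∈ P} + D(v)`, where `D(v) = Σ_i μ_i` for `v` of weight
`Σ_i μ_i δ_i` -/
def Dgrade {n : ℕ} {ι : Type} (wt : ι → Fin n → ℤ) (p : ChainBasis n ι) : ℤ :=
  (p.1.1.sum fun r k => (k : ℤ) * rootD r) + ∑ i, wt p.2 i

/-- The chain complex `C_•(n̄, V) = Λ^• n̄ ⊗ V` of a finite dimensional `h + n̄`-module `V`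
over `osp(1|2n)` (e.g. an `osp(1|2n)`-module), with its boundary operator.

`V` has a basis of weight vectors indexed by `ι` with weights `wt`; `wedge β` is (up to
sign) left exterior multiplication by the root vector `Y_β` on `Λ^• n̄ ⊗ V`; `Yact β` is
the action of `Y_β ∈ n̄` on `Λ^• n̄ ⊗ V` (adjoint action on `Λ^• n̄` tensored with the action
on `V`) — it replaces a wedge factor `Y_γ` by `[Y_β, Y_γ]` (a multiple of `Y_{β+γ}`) or acts
on the `V`-factor (lowering its weight by `β`); and `d` is the boundary operator, determined
by `δ*₀ = 0` and `δ*(Y ∧ f) = −Y·f − Y ∧ δ*(f)`. -/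
structure ChainData (n : ℕ) where
  /-- index of a basis of weight vectors of `V` -/
  ι : Type
  [fintypeV : Fintype ι]
  /-- the weights of the basis vectors of `V` -/
  wt : ι → Fin n → ℤ
  /-- exterior multiplication by `Y_β` -/
  wedge : OspRoot n → Chains n ι →ₗ[ℂ] Chains n ι
  wedge_spec : ∀ (β : OspRoot n) (p : ChainBasis n ι),
    (¬ β.IsOdd ∧ p.1.1 β = 1 ∧ wedge β (Finsupp.single p 1) = 0) ∨
    (∃ (ε : ℂ) (h : ∀ r : OspRoot n, ¬ r.IsOdd → (p.1.1 + Finsupp.single β 1 : OspRoot n →₀ ℕ) r ≤ 1),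
      (ε = 1 ∨ ε = -1) ∧
      wedge β (Finsupp.single p 1) =
        Finsupp.single (⟨⟨p.1.1 + Finsupp.single β 1, h⟩, p.2⟩ : ChainBasis n ι) ε)
  /-- the action of the root vector `Y_β ∈ n̄` on `Λ^• n̄ ⊗ V` -/
  Yact : OspRoot n → Chains n ι →ₗ[ℂ] Chains n ι
  Yact_spec : ∀ (β : OspRoot n) (p : ChainBasis n ι),
    Yact β (Finsupp.single p 1) ∈ Finsupp.supported ℂ ℂ
      {q : ChainBasis n ι |
        (∃ γ ρ' : OspRoot n, p.1.1 γ ≠ 0 ∧ rootVecZ ρ' = rootVecZ β + rootVecZ γ ∧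
           q.1.1 + Finsupp.single γ 1 = p.1.1 + Finsupp.single ρ' 1 ∧ q.2 = p.2) ∨
        (q.1 = p.1 ∧ wt q.2 = wt p.2 - rootVecZ β)}
  /-- the boundary operator `δ*` of the chain complex `C_•(n̄, V)` -/
  d : Chains n ι →ₗ[ℂ] Chains n ι
  d_zero : ∀ p : ChainBasis n ι, degOf p.1.1 = 0 → d (Finsupp.single p 1) = 0
  d_rec : ∀ (β : OspRoot n) (f : Chains n ι),
    d (wedge β f) = - Yact β f - wedge β (d f)

attribute [instance] ChainData.fintypeV

namespace ChainData

variable {n : ℕ} (D : ChainData n)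

/-- the subspace `R_•(n̄, V)` of `C_•(n̄,V)`: the span of the monomials containing no
`Y_{2δ_i}` and no `Y_{δ_i}^{∧2}` -/
def Rsub : Submodule ℂ (Chains n D.ι) := monSpan Rcond

/-- the subspace `A_• = ⊕_j A_•^{(j)}` of `C_•(n̄,V)` -/
def Asub : Submodule ℂ (Chains n D.ι) := monSpan (fun m => ∃ j : Fin n, Acond j m)

/-- the subspace `B_• = ⊕_j B_•^{(j)}` of `C_•(n̄,V)` -/
def Bsub : Submodule ℂ (Chains n D.ι) := monSpan (fun m => ∃ j : Fin n, Bcond j m)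

end ChainData

/-- the span of the monomials of wedge degree `k` satisfying a given condition on the
wedge part: the degree-`k` graded piece (in `C_k(n̄,V) = Λ^k n̄ ⊗ V`) of `monSpan P` -/
def monSpanDeg {n : ℕ} {ι : Type} (P : (OspRoot n →₀ ℕ) → Prop) (k : ℕ) :
    Submodule ℂ (Chains n ι) :=
  Finsupp.supported ℂ ℂ {p : ChainBasis n ι | P p.1.1 ∧ degOf p.1.1 = k}

/-- the `μ`-weight space of `C_•(n̄, V)` as an `h`-module -/
def weightSub {n : ℕ} {ι : Type} (wt : ι → Fin n → ℤ) (μ : Fin n → ℤ) :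
    Submodule ℂ (Chains n ι) :=
  Finsupp.supported ℂ ℂ {p : ChainBasis n ι | wtOf wt p = μ}

/-! A monomial of `W_•` has a least index `j` at which it contains `Y_{2δ_j}` or
`Y_{δ_j}^{∧2}`; it lies in `A^{(j)}` if `Y_{2δ_j}` is absent and in `B^{(j)}` if it is present,
and in none of the other `A^{(i)}`, `B^{(i)}`. As all these spaces are spanned by monomials, this
gives the independence, `A_• ∩ B_• = 0` and `A_• + B_• = W_•`. Replacing `Y_{δ_j}^{∧2}` by
`Y_{2δ_j}` (both of weight `−2δ_j`) does not change the least index, so it is a weight-preserving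
bijection from the monomials of `A_{k+1}` onto those of `B_k`, inverse to the reverse
replacement. -/

namespace Finsupp

variable {α M R : Type*} [Semiring R] [AddCommMonoid M] [Module R M]

theorem iSupIndep_supported {κ : Type*} {s : κ → Set α}
    (hs : Pairwise (Function.onFun Disjoint s)) : iSupIndep fun i => supported M R (s i) := by
  intro i
  refine (disjoint_supported_supported (t := ⋃ (j) (_ : j ≠ i), s j) ?_).mono_right ?_
  · simpa only [Set.disjoint_iUnion_right] using fun j hj => hs hj.symm
  · exact iSup₂_le fun j hj => supported_mono (Set.subset_biUnion_of_mem (u := s) hj)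

def supportedCongr {s t : Set α} (σ : s ≃ t) : supported M R s ≃ₗ[R] supported M R t :=
  (supportedEquivFinsupp s).trans ((Finsupp.domLCongr σ).trans (supportedEquivFinsupp t).symm)

theorem supportedCongr_mem_supported {s t u : Set α} (σ : s ≃ t)
    (hσ : ∀ p : s, (p : α) ∈ u → (σ p : α) ∈ u) {x : supported M R s}
    (hx : (x : α →₀ M) ∈ supported M R u) : (supportedCongr σ x : α →₀ M) ∈ supported M R u := by
  classical
  intro q hq
  obtain ⟨hq, hxq⟩ : ∃ hq : q ∈ t, (x : α →₀ M) (σ.symm ⟨q, hq⟩) ≠ 0 := by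
    simpa [supportedCongr] using hq
  simpa using hσ _ (hx (mem_support_iff.2 hxq))

end Finsupp

section MonSpan

variable {n : ℕ} {ι : Type}

theorem iSupIndep_monSpan {κ : Type*} {P : κ → (OspRoot n →₀ ℕ) → Prop}
    (hP : ∀ x y m, P x m → P y m → x = y) : iSupIndep fun x => monSpan (ι := ι) (P x) :=
  Finsupp.iSupIndep_supported fun x y hxy =>
    Set.disjoint_left.2 fun p hx hy => hxy (hP x y p.1.1 hx hy)

theorem disjoint_monSpan {P Q : (OspRoot n →₀ ℕ) → Prop} (h : ∀ m, P m → ¬ Q m) :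
    Disjoint (monSpan (ι := ι) P) (monSpan Q) :=
  Finsupp.disjoint_supported_supported (Set.disjoint_left.2 fun p => h p.1.1)

theorem monSpan_sup (P Q : (OspRoot n →₀ ℕ) → Prop) :
    monSpan (ι := ι) P ⊔ monSpan Q = monSpan fun m => P m ∨ Q m :=
  (Finsupp.supported_union _ _).symm

end MonSpan

namespace OspRoot

variable {n : ℕ}

theorem not_isOdd_dd (i : Fin n) : ¬ (dd i).IsOdd := id

end OspRoot

section LeadingIndex

variable {n : ℕ} {m : OspRoot n →₀ ℕ} {j j' : Fin n}

def WcondAt (m : OspRoot n →₀ ℕ) (i : Fin n) : Prop :=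
  1 ≤ m (.dd i) ∨ 2 ≤ m (.odd i)

theorem isLeast_wcondAt_iff :
    IsLeast {i | WcondAt m i} j ↔ WcondAt m j ∧ ∀ i < j, m (.dd i) = 0 ∧ m (.odd i) ≤ 1 := by
  simp only [IsLeast, lowerBounds, Set.mem_ofPred_eq, WcondAt]
  refine and_congr_right fun _ => ⟨fun h i hi => ?_, fun h i hi => ?_⟩
  · have := mt (h (a := i)) (not_le.2 hi)
    omega
  · by_contra! hlt
    have := h i hlt
    omega

theorem acond_iff : Acond j m ↔ IsLeast {i | WcondAt m i} j ∧ m (.dd j) = 0 := by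
  rw [isLeast_wcondAt_iff, Acond, WcondAt]
  grind

theorem bcond_iff : Bcond j m ↔ IsLeast {i | WcondAt m i} j ∧ 1 ≤ m (.dd j) := by
  rw [isLeast_wcondAt_iff, Bcond, WcondAt]
  grind

theorem Acond.eq (h : Acond j m) (h' : Acond j' m) : j = j' :=
  (acond_iff.1 h).1.unique (acond_iff.1 h').1

theorem Bcond.eq (h : Bcond j m) (h' : Bcond j' m) : j = j' :=
  (bcond_iff.1 h).1.unique (bcond_iff.1 h').1

theorem Acond.not_bcond (h : Acond j m) : ¬ Bcond j' m := fun h' => by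
  obtain ⟨hjA, hdd⟩ := acond_iff.1 h
  obtain ⟨hjB, hdd'⟩ := bcond_iff.1 h'
  obtain rfl := hjA.unique hjB
  omega

theorem sumElim_acond_bcond_eq {x y : Fin n ⊕ Fin n} (hx : Sum.elim Acond Bcond x m)
    (hy : Sum.elim Acond Bcond y m) : x = y := by
  rcases x with j | j <;> rcases y with j' | j'
  · exact congrArg Sum.inl (Acond.eq hx hy)
  · exact (Acond.not_bcond hx hy).elim
  · exact (Acond.not_bcond hy hx).elim
  · exact congrArg Sum.inr (Bcond.eq hx hy)

theorem wcond_iff : Wcond m ↔ (∃ j, Acond j m) ∨ ∃ j, Bcond j m := by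
  refine ⟨fun ⟨i, hi⟩ => ?_, ?_⟩
  · obtain ⟨j, hj, hmin⟩ := wellFounded_lt.has_min {i | WcondAt m i} ⟨i, hi⟩
    have hj : IsLeast {i | WcondAt m i} j := ⟨hj, fun i hi => not_lt.1 (hmin i hi)⟩
    rcases Nat.eq_zero_or_pos (m (.dd j)) with h0 | hpos
    · exact .inl ⟨_, acond_iff.2 ⟨hj, h0⟩⟩
    · exact .inr ⟨_, bcond_iff.2 ⟨hj, hpos⟩⟩
  · rintro (⟨j, h⟩ | ⟨j, h⟩)
    · exact ⟨j, (acond_iff.1 h).1.1⟩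
    · exact ⟨j, (bcond_iff.1 h).1.1⟩

end LeadingIndex

section Moves

open Finsupp

variable {n : ℕ} {m : OspRoot n →₀ ℕ} {j : Fin n}

/-- `Y_{δ_j}^{∧2} ∧ f ↦ Y_{2δ_j} ∧ f` -/
def contractSq (j : Fin n) (m : OspRoot n →₀ ℕ) : OspRoot n →₀ ℕ :=
  m + single (.dd j) 1 - single (.odd j) 2

def expandSq (j : Fin n) (m : OspRoot n →₀ ℕ) : OspRoot n →₀ ℕ :=
  m + single (.odd j) 2 - single (.dd j) 1

theorem contractSq_add_single (h : 2 ≤ m (.odd j)) :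
    contractSq j m + single (.odd j) 2 = m + single (.dd j) 1 :=
  tsub_add_cancel_of_le (le_add_right (single_le_iff.2 h))

theorem expandSq_add_single (h : 1 ≤ m (.dd j)) :
    expandSq j m + single (.dd j) 1 = m + single (.odd j) 2 :=
  tsub_add_cancel_of_le (le_add_right (single_le_iff.2 h))

theorem expandSq_contractSq (h : 2 ≤ m (.odd j)) : expandSq j (contractSq j m) = m := by
  rw [expandSq, contractSq_add_single h, add_tsub_cancel_right]

theorem contractSq_expandSq (h : 1 ≤ m (.dd j)) : contractSq j (expandSq j m) = m := by
  rw [contractSq, expandSq_add_single h, add_tsub_cancel_right]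

theorem contractSq_apply (r : OspRoot n) :
    contractSq j m r = m r + (if r = .dd j then 1 else 0) - if r = .odd j then 2 else 0 := by
  simp [contractSq, single_apply, eq_comm]

theorem expandSq_apply (r : OspRoot n) :
    expandSq j m r = m r + (if r = .odd j then 2 else 0) - if r = .dd j then 1 else 0 := by
  simp [expandSq, single_apply, eq_comm]

theorem Acond.bcond_contractSq (h : Acond j m) : Bcond j (contractSq j m) := by
  refine ⟨by simp [contractSq_apply, OspRoot.dd], fun i hi => ?_⟩
  simpa [contractSq_apply, OspRoot.dd, hi.ne] using h.2.2 i hi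

theorem Bcond.acond_expandSq (h : Bcond j m) (hm : m (.dd j) ≤ 1) : Acond j (expandSq j m) := by
  refine ⟨by simp [expandSq_apply, OspRoot.dd],
    by simpa [expandSq_apply, OspRoot.dd, Nat.sub_eq_zero_iff_le] using hm, fun i hi => ?_⟩
  simpa [expandSq_apply, OspRoot.dd, hi.ne] using h.2 i hi

theorem Acond.contractSq_le_one (h : Acond j m) (hm : ∀ r, ¬ r.IsOdd → m r ≤ 1) (r : OspRoot n)
    (hr : ¬ r.IsOdd) : contractSq j m r ≤ 1 := by
  have hodd : r ≠ .odd j := by rintro rfl; exact hr trivial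
  rw [contractSq_apply, if_neg hodd]
  split_ifs with hdd
  · subst hdd; simp [h.2.1]
  · simpa using hm r hr

theorem expandSq_le_one (hm : ∀ r, ¬ r.IsOdd → m r ≤ 1) (r : OspRoot n) (hr : ¬ r.IsOdd) :
    expandSq j m r ≤ 1 := by
  have hodd : r ≠ .odd j := by rintro rfl; exact hr trivial
  rw [expandSq_apply, if_neg hodd]
  have := hm r hr
  omega

theorem degOf_eq_degree (m : OspRoot n →₀ ℕ) : degOf m = m.degree := rfl

theorem degOf_contractSq (h : 2 ≤ m (.odd j)) : degOf (contractSq j m) + 1 = degOf m := by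
  have := congrArg degree (contractSq_add_single h)
  simp only [map_add, degree_single, ← degOf_eq_degree] at this
  omega

theorem degOf_expandSq (h : 1 ≤ m (.dd j)) : degOf (expandSq j m) = degOf m + 1 := by
  have := congrArg degree (expandSq_add_single h)
  simp only [map_add, degree_single, ← degOf_eq_degree] at this
  omega

theorem sum_smul_rootVecZ (m : OspRoot n →₀ ℕ) :
    (m.sum fun r k => (k : ℤ) • rootVecZ r) = linearCombination ℕ rootVecZ m := by
  simp [linearCombination_apply]

theorem rootVecZ_dd (j : Fin n) : rootVecZ (.dd j) = 2 • rootVecZ (.odd j) := by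
  funext t
  by_cases h : t = j <;> simp [rootVecZ, OspRoot.dd, h]

theorem sum_smul_rootVecZ_contractSq (h : 2 ≤ m (.odd j)) :
    ((contractSq j m).sum fun r k => (k : ℤ) • rootVecZ r) =
      m.sum fun r k => (k : ℤ) • rootVecZ r := by
  have := congrArg (linearCombination ℕ rootVecZ) (contractSq_add_single h)
  simp only [map_add, linearCombination_single, rootVecZ_dd, one_smul] at this
  rw [sum_smul_rootVecZ, sum_smul_rootVecZ, add_left_injective _ this]

end Moves

section ChainBasis

variable {n : ℕ} {ι : Type} {j : Fin n}

open Classical in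
def contractBasis (p : ChainBasis n ι) : ChainBasis n ι :=
  if h : ∃ j, Acond j p.1.1 then
    (⟨contractSq h.choose p.1.1, h.choose_spec.contractSq_le_one p.1.2⟩, p.2)
  else p

open Classical in
def expandBasis (p : ChainBasis n ι) : ChainBasis n ι :=
  if h : ∃ j, Bcond j p.1.1 then (⟨expandSq h.choose p.1.1, expandSq_le_one p.1.2⟩, p.2) else p

theorem contractBasis_mk {m : OspRoot n →₀ ℕ} (hm : ∀ r, ¬ r.IsOdd → m r ≤ 1) (v : ι)
    (h : Acond j m) :
    contractBasis ((⟨m, hm⟩, v) : ChainBasis n ι) =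
      (⟨contractSq j m, h.contractSq_le_one hm⟩, v) := by
  have hex : ∃ j, Acond j m := ⟨j, h⟩
  exact (dif_pos hex).trans
    (Prod.ext (Subtype.ext (congrArg (contractSq · m) (hex.choose_spec.eq h))) rfl)

theorem expandBasis_mk {m : OspRoot n →₀ ℕ} (hm : ∀ r, ¬ r.IsOdd → m r ≤ 1) (v : ι)
    (h : Bcond j m) :
    expandBasis ((⟨m, hm⟩, v) : ChainBasis n ι) = (⟨expandSq j m, expandSq_le_one hm⟩, v) := by
  have hex : ∃ j, Bcond j m := ⟨j, h⟩
  exact (dif_pos hex).trans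
    (Prod.ext (Subtype.ext (congrArg (expandSq · m) (hex.choose_spec.eq h))) rfl)

theorem bijOn_contractBasis (k : ℕ) :
    Set.BijOn contractBasis {p : ChainBasis n ι | (∃ j, Acond j p.1.1) ∧ degOf p.1.1 = k + 1}
      {p | (∃ j, Bcond j p.1.1) ∧ degOf p.1.1 = k} := by
  refine Set.InvOn.bijOn (f' := expandBasis) ⟨?_, ?_⟩ ?_ ?_
  · rintro ⟨⟨m, hm⟩, v⟩ ⟨⟨j, h : Acond j m⟩, -⟩
    rw [contractBasis_mk hm v h, expandBasis_mk _ v h.bcond_contractSq]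
    exact Prod.ext (Subtype.ext (expandSq_contractSq h.1)) rfl
  · rintro ⟨⟨m, hm⟩, v⟩ ⟨⟨j, h : Bcond j m⟩, -⟩
    have hA := h.acond_expandSq (hm _ (OspRoot.not_isOdd_dd j))
    rw [expandBasis_mk hm v h, contractBasis_mk _ v hA]
    exact Prod.ext (Subtype.ext (contractSq_expandSq h.1)) rfl
  · rintro ⟨⟨m, hm⟩, v⟩ ⟨⟨j, h : Acond j m⟩, hdeg : degOf m = k + 1⟩
    rw [contractBasis_mk hm v h]
    have := degOf_contractSq h.1
    exact ⟨⟨j, h.bcond_contractSq⟩, by dsimp only; omega⟩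
  · rintro ⟨⟨m, hm⟩, v⟩ ⟨⟨j, h : Bcond j m⟩, hdeg : degOf m = k⟩
    rw [expandBasis_mk hm v h]
    exact ⟨⟨j, h.acond_expandSq (hm _ (OspRoot.not_isOdd_dd j))⟩,
      by dsimp only; rw [degOf_expandSq h.1, hdeg]⟩

theorem wtOf_contractBasis (wt : ι → Fin n → ℤ) {m : OspRoot n →₀ ℕ}
    (hm : ∀ r, ¬ r.IsOdd → m r ≤ 1) (v : ι) (h : Acond j m) :
    wtOf wt (contractBasis ((⟨m, hm⟩, v) : ChainBasis n ι)) = wtOf wt (⟨m, hm⟩, v) := by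
  simp only [contractBasis_mk hm v h, wtOf, sum_smul_rootVecZ_contractSq h.1]

end ChainBasis

theorem chains_AB_decomposition_general {n : ℕ} (ι : Type) (wt : ι → Fin n → ℤ) :
    iSupIndep (fun x : Fin n ⊕ Fin n =>
      Sum.elim (fun j => monSpan (n := n) (ι := ι) (Acond j))
        (fun j => monSpan (n := n) (ι := ι) (Bcond j)) x) ∧
    Disjoint (monSpan (n := n) (ι := ι) fun m => ∃ j : Fin n, Acond j m)
      (monSpan (n := n) (ι := ι) fun m => ∃ j : Fin n, Bcond j m) ∧
    ((monSpan (n := n) (ι := ι) fun m => ∃ j : Fin n, Acond j m) ⊔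
      (monSpan (n := n) (ι := ι) fun m => ∃ j : Fin n, Bcond j m) =
      monSpan (n := n) (ι := ι) Wcond) ∧
    ∀ k : ℕ, ∃ e : (monSpanDeg (n := n) (ι := ι) (fun m => ∃ j : Fin n, Acond j m) (k+1)) ≃ₗ[ℂ]
        (monSpanDeg (n := n) (ι := ι) (fun m => ∃ j : Fin n, Bcond j m) k),
      ∀ (μ : Fin n → ℤ) (x : monSpanDeg (n := n) (ι := ι) (fun m => ∃ j : Fin n, Acond j m) (k+1)),
        (x : Chains n ι) ∈ weightSub wt μ → ((e x : Chains n ι) ∈ weightSub wt μ) := by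
  refine ⟨?_, disjoint_monSpan fun m ⟨_, hA⟩ ⟨_, hB⟩ => hA.not_bcond hB, ?_, fun k => ?_⟩
  · have hfamily : (fun x => Sum.elim (fun j => monSpan (n := n) (ι := ι) (Acond j))
        (fun j => monSpan (Bcond j)) x) = fun x => monSpan (Sum.elim Acond Bcond x) := by
      funext x
      cases x <;> rfl
    rw [hfamily]
    exact iSupIndep_monSpan fun x y m => sumElim_acond_bcond_eq
  · rw [monSpan_sup]
    congr 1
    funext m
    exact propext wcond_iff.symm
  · let σ := (bijOn_contractBasis (n := n) (ι := ι) k).equiv contractBasis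
    refine ⟨Finsupp.supportedCongr σ, fun μ x hx => Finsupp.supportedCongr_mem_supported σ ?_ hx⟩
    intro p hp
    obtain ⟨⟨⟨m, hm⟩, v⟩, ⟨j, hA⟩, _⟩ := p
    exact (wtOf_contractBasis wt hm v hA).trans hp

/-- For `g = osp(1|2n)` and any finite dimensional `g`-module `V` (with a basis of weight
vectors indexed by `ι`, of weights `wt`), the subspaces `A_•^{(1)}, …, A_•^{(n)}` and
`B_•^{(1)}, …, B_•^{(n)}` of `C_•(n̄, V)` are linearly independent; for
`A_• = ⊕_j A_•^{(j)}` and `B_• = ⊕_j B_•^{(j)}` one has `W_•(n̄,V) = A_• ⊕ B_•`, and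
`A_k ≅ B_{k−1}` as `h`-modules (i.e. by a weight-preserving linear isomorphism) for every
`k ∈ ℕ`. -/
theorem chains_AB_decomposition {n : ℕ} (ι : Type) [Fintype ι] (wt : ι → Fin n → ℤ) :
    iSupIndep (fun x : Fin n ⊕ Fin n =>
      Sum.elim (fun j => monSpan (n := n) (ι := ι) (Acond j))
        (fun j => monSpan (n := n) (ι := ι) (Bcond j)) x) ∧
    Disjoint (monSpan (n := n) (ι := ι) fun m => ∃ j : Fin n, Acond j m)
      (monSpan (n := n) (ι := ι) fun m => ∃ j : Fin n, Bcond j m) ∧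
    ((monSpan (n := n) (ι := ι) fun m => ∃ j : Fin n, Acond j m) ⊔
      (monSpan (n := n) (ι := ι) fun m => ∃ j : Fin n, Bcond j m) =
      monSpan (n := n) (ι := ι) Wcond) ∧
    ∀ k : ℕ, ∃ e : (monSpanDeg (n := n) (ι := ι) (fun m => ∃ j : Fin n, Acond j m) (k+1)) ≃ₗ[ℂ]
        (monSpanDeg (n := n) (ι := ι) (fun m => ∃ j : Fin n, Bcond j m) k),
      ∀ (μ : Fin n → ℤ) (x : monSpanDeg (n := n) (ι := ι) (fun m => ∃ j : Fin n, Acond j m) (k+1)),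
        (x : Chains n ι) ∈ weightSub wt μ → ((e x : Chains n ι) ∈ weightSub wt μ) :=
  chains_AB_decomposition_general ι wt

end
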